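/- Let H = (ℂ^d)^{⊗M} and let {P_n^{(b)}} be a complete set of d+1 MUMs on ℂ^d of Kalev–Gour form with parameter κ. For each n, b let 𝐏_n^{(b)} = Σ_{i=1}^M 𝕀^{⊗(i−1)} ⊗ P_n^{(b)} ⊗ 𝕀^{⊗(M−i)}. Then Σ_{b=1}^{d+1} Σ_{n=1}^{d} (𝐏_n^{(b)})² ≤ [M²(1+κ) + M(dκ − 1)] · 𝕀^{⊗M} as operators on H. -/

import Mathlib

open Matrix ComplexOrder

/-- The Kalev–Gour operators F_n^{(b)}. -/
noncomputable def KGop {d : ℕ} (F : Fin (d - 1) → Fin (d + 1) → Matrix (Fin d) (Fin d) ℂ)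
    (b : Fin (d + 1)) (n : Fin d) : Matrix (Fin d) (Fin d) ℂ :=
  if h : (n : ℕ) < d - 1
  then (∑ m, F m b) - (((d : ℝ) + Real.sqrt d : ℝ) : ℂ) • F ⟨(n : ℕ), h⟩ b
  else (((1 : ℝ) + Real.sqrt d : ℝ) : ℂ) • (∑ m, F m b)

/-- The Kalev–Gour MUM operators P_n^{(b)} = 𝕀/d + t F_n^{(b)}. -/
noncomputable def KGP {d : ℕ} (F : Fin (d - 1) → Fin (d + 1) → Matrix (Fin d) (Fin d) ℂ)
    (t : ℝ) (b : Fin (d + 1)) (n : Fin d) : Matrix (Fin d) (Fin d) ℂ :=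
  (1 / (d : ℂ)) • (1 : Matrix (Fin d) (Fin d) ℂ) + (t : ℂ) • KGop F b n

/-- The operator 𝕀^{⊗(i−1)} ⊗ A ⊗ 𝕀^{⊗(M−i)} acting on (ℂ^d)^{⊗M}, realized as a matrix
indexed by functions Fin M → Fin d. -/
def localOp {M d : ℕ} (i : Fin M) (A : Matrix (Fin d) (Fin d) ℂ) :
    Matrix (Fin M → Fin d) (Fin M → Fin d) ℂ :=
  fun x y => if (∀ j, j ≠ i → x j = y j) then A (x i) (y i) else 0

theorem comp_rel {d : ℕ} (hd : 2 ≤ d)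
    (F : Fin (d - 1) → Fin (d + 1) → Matrix (Fin d) (Fin d) ℂ)
    (hHerm : ∀ n b, (F n b).IsHermitian)
    (htraceless : ∀ n b, (F n b).trace = 0)
    (horth : ∀ n b n' b', ((F n b) * (F n' b')).trace = if n = n' ∧ b = b' then 1 else 0)
    (p q r s : Fin d) :
    ∑ m : Fin (d - 1), ∑ b : Fin (d + 1), F m b p q * F m b r s
      = (if p = s ∧ r = q then 1 else 0) - (1 / (d : ℂ)) * (if p = q ∧ r = s then 1 else 0) := by
  classical
  have hd0 : (0:ℝ) < d := by positivity
  have hsq : Real.sqrt d * Real.sqrt d = d := Real.mul_self_sqrt hd0.le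
  have hcc : ((1 / Real.sqrt d : ℝ) : ℂ) * ((1 / Real.sqrt d : ℝ) : ℂ) = 1 / (d : ℂ) := by
    rw [← Complex.ofReal_mul, div_mul_div_comm, one_mul, hsq]
    push_cast
    rfl
  have hcc' : (((Real.sqrt d : ℝ)):ℂ)⁻¹ * (((Real.sqrt d : ℝ)):ℂ)⁻¹ = ((d:ℕ):ℂ)⁻¹ := by
    rw [← mul_inv, ← Complex.ofReal_mul, hsq]
    norm_num
  set G : ((Fin (d - 1) × Fin (d + 1)) ⊕ Unit) → EuclideanSpace ℂ (Fin d × Fin d) :=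
    fun a => match a with
    | Sum.inl mb => WithLp.toLp 2 (fun pq : Fin d × Fin d => F mb.1 mb.2 pq.1 pq.2)
    | Sum.inr _ => WithLp.toLp 2 (fun pq : Fin d × Fin d =>
        if pq.1 = pq.2 then ((1 / Real.sqrt d : ℝ) : ℂ) else 0)
    with hG
  have hstar : ∀ m b (i j : Fin d), (starRingEnd ℂ) (F m b i j) = F m b j i :=
    fun m b i j => (hHerm m b).apply j i
  have htr : ∀ m b, ∑ i : Fin d, F m b i i = 0 := by
    intro m b
    have := htraceless m b
    rwa [Matrix.trace] at this
  have hon : Orthonormal ℂ G := by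
    rw [orthonormal_iff_ite]
    rintro (⟨m, b⟩ | u) (⟨m', b'⟩ | u') <;>
      simp only [PiLp.inner_apply, RCLike.inner_apply', Fintype.sum_prod_type, hG]
    · simp only [hstar]
      rw [Finset.sum_comm]
      have htr2 := horth m b m' b'
      rw [Matrix.trace] at htr2
      simp only [Matrix.diag, Matrix.mul_apply] at htr2
      rw [htr2]
      simp [Prod.ext_iff]
    · rw [if_neg (fun h => by cases h)]
      rw [Finset.sum_congr rfl fun x _ => Finset.sum_eq_single x
        (fun j _ hj => by rw [if_neg (fun h => hj (h.symm)), mul_zero])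
        (fun h => absurd (Finset.mem_univ x) h)]
      simp only [if_pos rfl, ← Finset.sum_mul, ← map_sum, htr, map_zero, zero_mul]
    · rw [if_neg (fun h => by cases h)]
      rw [Finset.sum_congr rfl fun x _ => Finset.sum_eq_single x
        (fun j _ hj => by rw [if_neg (fun h => hj (h.symm)), map_zero, zero_mul])
        (fun h => absurd (Finset.mem_univ x) h)]
      simp only [if_pos rfl, ← Finset.mul_sum, htr, mul_zero, Finset.sum_const,
        Finset.card_univ, Fintype.card_fin, smul_zero]
    · rw [if_pos trivial]
      rw [Finset.sum_congr rfl fun x _ => Finset.sum_eq_single x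
        (fun j _ hj => by rw [if_neg (fun h => hj (h.symm)), map_zero, zero_mul])
        (fun h => absurd (Finset.mem_univ x) h)]
      simp only [if_pos rfl, if_true, Complex.conj_ofReal, hcc, Finset.sum_const,
        Finset.card_univ, Fintype.card_fin, nsmul_eq_mul, mul_one_div]
      rw [div_self (by exact_mod_cast hd0.ne' : (d:ℂ) ≠ 0)]
  have hcard : Fintype.card ((Fin (d - 1) × Fin (d + 1)) ⊕ Unit)
      = Module.finrank ℂ (EuclideanSpace ℂ (Fin d × Fin d)) := by
    rw [finrank_euclideanSpace]
    simp only [Fintype.card_sum, Fintype.card_prod, Fintype.card_fin, Fintype.card_unit]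
    obtain ⟨e, rfl⟩ : ∃ e, d = e + 1 := ⟨d - 1, by omega⟩
    simp only [Nat.add_sub_cancel]
    ring
  have hsp : ⊤ ≤ Submodule.span ℂ (Set.range G) :=
    (hon.linearIndependent.span_eq_top_of_card_eq_finrank hcard).ge
  set B := OrthonormalBasis.mk hon hsp with hB
  have recon : ∀ X : EuclideanSpace ℂ (Fin d × Fin d),
      ∑ a, (inner ℂ (G a) X : ℂ) • G a = X := by
    intro X
    have h1 := B.sum_repr' X
    rw [hB] at h1
    simpa [OrthonormalBasis.coe_mk] using h1
  set X : EuclideanSpace ℂ (Fin d × Fin d) :=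
    WithLp.toLp 2 (fun rs : Fin d × Fin d =>
      (if rs.1 = q then 1 else 0) * (if rs.2 = p then 1 else 0)) with hX
  have hXa : ∀ a, (inner ℂ (G a) X : ℂ) = (starRingEnd ℂ) (G a (q, p)) := by
    intro a
    rw [PiLp.inner_apply]
    simp only [RCLike.inner_apply']
    rw [Fintype.sum_prod_type]
    simp [hX, Finset.sum_ite_eq', mul_ite, mul_zero, mul_one]
  have h2 := congrArg (fun v : EuclideanSpace ℂ (Fin d × Fin d) => v (r, s)) (recon X)
  rw [WithLp.ofLp_sum, Finset.sum_apply] at h2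
  simp only [Pi.smul_apply, smul_eq_mul, hXa] at h2
  rw [Fintype.sum_sum_type, Fintype.sum_prod_type] at h2
  simp only [hG, hstar, Finset.univ_unique, Finset.sum_singleton, PiLp.smul_apply,
    Pi.smul_apply, smul_eq_mul] at h2
  have hinr : (starRingEnd ℂ) (if q = p then ((1 / Real.sqrt d : ℝ) : ℂ) else 0) *
      (if r = s then ((1 / Real.sqrt d : ℝ) : ℂ) else 0)
      = (1 / (d : ℂ)) * (if p = q ∧ r = s then 1 else 0) := by
    by_cases h1 : q = p
    · subst h1
      by_cases h3 : r = s <;> simp [h3, Complex.conj_ofReal, hcc, hcc']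
    · have h1' : ¬ p = q := fun h => h1 h.symm
      simp [h1, h1']
  have hXrs : X (r, s) = if p = s ∧ r = q then 1 else 0 := by
    rw [hX]
    by_cases h1 : s = p <;> by_cases h3 : r = q <;>
      simp [h1, h3, eq_comm (a := p) (b := s)]
  rw [hinr, hXrs] at h2
  linear_combination h2

theorem sum_fin_split {α : Type*} [AddCommMonoid α] {d : ℕ} (hd : 1 ≤ d) (g : Fin d → α) :
    ∑ n, g n = (∑ k : Fin (d - 1), g (Fin.castLE (by omega) k)) + g ⟨d - 1, by omega⟩ := by
  have h : d - 1 + 1 = d := by omega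
  rw [← Equiv.sum_comp (finCongr h) g, Fin.sum_univ_castSucc]
  exact congrArg₂ (· + ·)
    (Finset.sum_congr rfl fun k _ => congrArg g (by ext; simp))
    (congrArg g (by ext; simp [Fin.last]))

theorem sumKGop {d : ℕ} (hd : 2 ≤ d) (F : Fin (d - 1) → Fin (d + 1) → Matrix (Fin d) (Fin d) ℂ)
    (b : Fin (d + 1)) : ∑ n : Fin d, KGop F b n = 0 := by
  rw [sum_fin_split (by omega)]
  have h1 : ∀ k : Fin (d - 1), KGop F b (Fin.castLE (by omega) k)
      = (∑ m, F m b) - (((d : ℝ) + Real.sqrt d : ℝ) : ℂ) • F k b := by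
    intro k
    rw [KGop, dif_pos (by exact k.isLt)]
    congr 1
  have h2 : KGop F b ⟨d - 1, by omega⟩
      = (((1 : ℝ) + Real.sqrt d : ℝ) : ℂ) • (∑ m, F m b) := by
    rw [KGop, dif_neg (by simp)]
  rw [Finset.sum_congr rfl fun k _ => h1 k, h2, Finset.sum_sub_distrib, Finset.sum_const,
    Finset.card_univ, Fintype.card_fin, ← Finset.smul_sum]
  have hcast : ((d - 1 : ℕ) : ℂ) = (d : ℂ) - 1 := by
    push_cast [Nat.cast_sub (by omega : 1 ≤ d)]; ring
  rw [← Nat.cast_smul_eq_nsmul ℂ, hcast]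
  have hce : (((1:ℝ) + Real.sqrt d : ℝ) : ℂ)
      = (((d:ℝ) + Real.sqrt d : ℝ) : ℂ) - ((d : ℂ) - 1) := by push_cast; ring
  rw [hce, sub_smul, sub_smul, sub_smul, one_smul]
  abel

theorem KGop4 {d : ℕ} (hd : 2 ≤ d) (F : Fin (d - 1) → Fin (d + 1) → Matrix (Fin d) (Fin d) ℂ)
    (b : Fin (d + 1)) (p q r s : Fin d) :
    ∑ n : Fin d, KGop F b n p q * KGop F b n r s
      = (((d : ℝ) * (1 + Real.sqrt d) ^ 2 : ℝ) : ℂ) * ∑ m, F m b p q * F m b r s := by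
  have hd0 : (0:ℝ) < d := by positivity
  have hsq : Real.sqrt d * Real.sqrt d = d := Real.mul_self_sqrt hd0.le
  set c : ℂ := (((d : ℝ) + Real.sqrt d : ℝ) : ℂ) with hc
  set e : ℂ := (((1 : ℝ) + Real.sqrt d : ℝ) : ℂ) with he
  set s1 : ℂ := ∑ m, F m b p q with hs1
  set s2 : ℂ := ∑ m, F m b r s with hs2
  have h1 : ∀ k : Fin (d - 1), KGop F b (Fin.castLE (by omega) k) p q
      = s1 - c * F k b p q := by
    intro k
    rw [KGop, dif_pos (by exact k.isLt)]
    have : (⟨((Fin.castLE (by omega : d - 1 ≤ d) k) : ℕ), k.isLt⟩ : Fin (d - 1)) = k := by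
      ext; simp
    rw [this, Matrix.sub_apply, Matrix.smul_apply, Matrix.sum_apply, smul_eq_mul]
  have h1' : ∀ k : Fin (d - 1), KGop F b (Fin.castLE (by omega) k) r s
      = s2 - c * F k b r s := by
    intro k
    rw [KGop, dif_pos (by exact k.isLt)]
    have : (⟨((Fin.castLE (by omega : d - 1 ≤ d) k) : ℕ), k.isLt⟩ : Fin (d - 1)) = k := by
      ext; simp
    rw [this, Matrix.sub_apply, Matrix.smul_apply, Matrix.sum_apply, smul_eq_mul]
  have h2 : KGop F b ⟨d - 1, by omega⟩ p q = e * s1 := by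
    rw [KGop, dif_neg (by simp), Matrix.smul_apply, Matrix.sum_apply, smul_eq_mul]
  have h2' : KGop F b ⟨d - 1, by omega⟩ r s = e * s2 := by
    rw [KGop, dif_neg (by simp), Matrix.smul_apply, Matrix.sum_apply, smul_eq_mul]
  rw [sum_fin_split (by omega : 1 ≤ d) (fun n => KGop F b n p q * KGop F b n r s)]
  rw [Finset.sum_congr rfl fun k _ => by rw [h1 k, h1' k], h2, h2']
  have expand : ∀ k : Fin (d - 1), (s1 - c * F k b p q) * (s2 - c * F k b r s)
      = s1 * s2 - c * (F k b p q * s2 + s1 * F k b r s)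
        + c ^ 2 * (F k b p q * F k b r s) := by intro k; ring
  rw [Finset.sum_congr rfl fun k _ => expand k]
  rw [Finset.sum_add_distrib, Finset.sum_sub_distrib, Finset.sum_const, Finset.card_univ,
    Fintype.card_fin, ← Finset.mul_sum, ← Finset.mul_sum, Finset.sum_add_distrib,
    ← Finset.sum_mul, ← Finset.mul_sum, ← hs1, ← hs2, nsmul_eq_mul]
  have hcast : ((d - 1 : ℕ) : ℂ) = (d : ℂ) - 1 := by
    push_cast [Nat.cast_sub (by omega : 1 ≤ d)]; ring
  rw [hcast]
  have hsqC : ((Real.sqrt d : ℝ) : ℂ) ^ 2 = (d : ℂ) := by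
    rw [sq, ← Complex.ofReal_mul, hsq]
    norm_cast
  have hc2 : c ^ 2 = (((d : ℝ) * (1 + Real.sqrt d) ^ 2 : ℝ) : ℂ) := by
    rw [hc]
    push_cast
    linear_combination (1 - (d:ℂ)) * hsqC
  have he2 : (e * s1) * (e * s2) = e ^ 2 * (s1 * s2) := by ring
  rw [he2]
  have hcoef : ((d:ℂ) - 1) * (s1 * s2) - c * (s1 * s2 + s1 * s2) + e ^ 2 * (s1 * s2)
      = (((d:ℂ) - 1) - 2 * c + e ^ 2) * (s1 * s2) := by ring
  have hzero : ((d:ℂ) - 1) - 2 * c + e ^ 2 = 0 := by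
    rw [hc, he]
    push_cast
    linear_combination hsqC
  calc ((d:ℂ) - 1) * (s1 * s2) - c * (s1 * s2 + s1 * s2)
        + c ^ 2 * ∑ m, F m b p q * F m b r s + e ^ 2 * (s1 * s2)
      = (((d:ℂ) - 1) - 2 * c + e ^ 2) * (s1 * s2)
        + c ^ 2 * ∑ m, F m b p q * F m b r s := by ring
    _ = (((d : ℝ) * (1 + Real.sqrt d) ^ 2 : ℝ) : ℂ) * ∑ m, F m b p q * F m b r s := by
        rw [hzero, zero_mul, zero_add, hc2]

theorem P4 {d : ℕ} (hd : 2 ≤ d) (F : Fin (d - 1) → Fin (d + 1) → Matrix (Fin d) (Fin d) ℂ)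
    (hHerm : ∀ n b, (F n b).IsHermitian)
    (htraceless : ∀ n b, (F n b).trace = 0)
    (horth : ∀ n b n' b', ((F n b) * (F n' b')).trace = if n = n' ∧ b = b' then 1 else 0)
    (t : ℝ) (p q r s : Fin d) :
    ∑ b : Fin (d + 1), ∑ n : Fin d, KGP F t b n p q * KGP F t b n r s
      = ((((d:ℝ) + 1) / d - t ^ 2 * (1 + Real.sqrt d) ^ 2 : ℝ) : ℂ)
          * (if p = q ∧ r = s then 1 else 0)
        + ((t ^ 2 * d * (1 + Real.sqrt d) ^ 2 : ℝ) : ℂ) * (if p = s ∧ r = q then 1 else 0) := by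
  have hd0 : (0:ℝ) < d := by positivity
  have hdC : (d : ℂ) ≠ 0 := by exact_mod_cast hd0.ne'
  set a1 : ℂ := if p = q then 1 / (d:ℂ) else 0 with ha1
  set a2 : ℂ := if r = s then 1 / (d:ℂ) else 0 with ha2
  have hentry : ∀ b n (i j : Fin d), KGP F t b n i j
      = (if i = j then 1 / (d:ℂ) else 0) + (t:ℂ) * KGop F b n i j := by
    intro b n i j
    rw [KGP, Matrix.add_apply, Matrix.smul_apply, Matrix.smul_apply, Matrix.one_apply,
      smul_eq_mul, smul_eq_mul, mul_ite, mul_one, mul_zero]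
  have hsum0 : ∀ b (i j : Fin d), ∑ n : Fin d, KGop F b n i j = 0 := by
    intro b i j
    have h := congrFun (congrFun (sumKGop hd F b) i) j
    simpa [Matrix.sum_apply] using h
  have hb : ∀ b : Fin (d + 1), ∑ n : Fin d, KGP F t b n p q * KGP F t b n r s
      = (d:ℂ) * (a1 * a2) + (t:ℂ) ^ 2 * ((((d : ℝ) * (1 + Real.sqrt d) ^ 2 : ℝ) : ℂ)
          * ∑ m, F m b p q * F m b r s) := by
    intro b
    have expand : ∀ n : Fin d, KGP F t b n p q * KGP F t b n r s
        = a1 * a2 + (t:ℂ) * (KGop F b n p q * a2 + a1 * KGop F b n r s)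
          + (t:ℂ) ^ 2 * (KGop F b n p q * KGop F b n r s) := by
      intro n; rw [hentry, hentry, ← ha1, ← ha2]; ring
    rw [Finset.sum_congr rfl fun n _ => expand n, Finset.sum_add_distrib,
      Finset.sum_add_distrib, Finset.sum_const, Finset.card_univ, Fintype.card_fin,
      ← Finset.mul_sum, ← Finset.mul_sum, Finset.sum_add_distrib, ← Finset.sum_mul,
      ← Finset.mul_sum, hsum0, hsum0, zero_mul, mul_zero, add_zero, mul_zero, add_zero,
      nsmul_eq_mul, KGop4 hd F b p q r s]
  rw [Finset.sum_congr rfl fun b _ => hb b, Finset.sum_add_distrib, Finset.sum_const,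
    Finset.card_univ, Fintype.card_fin, ← Finset.mul_sum, ← Finset.mul_sum, Finset.sum_comm,
    comp_rel hd F hHerm htraceless horth p q r s, nsmul_eq_mul]
  have haa : a1 * a2 = (1/(d:ℂ))^2 * (if p = q ∧ r = s then 1 else 0) := by
    rw [ha1, ha2]
    by_cases h1 : p = q <;> by_cases h2 : r = s <;> simp [h1, h2] <;> ring
  rw [haa]
  push_cast
  set u : ℂ := if p = q ∧ r = s then 1 else 0
  set v : ℂ := if p = s ∧ r = q then 1 else 0
  field_simp
  ring

theorem Psq {d : ℕ} (hd : 2 ≤ d) (F : Fin (d - 1) → Fin (d + 1) → Matrix (Fin d) (Fin d) ℂ)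
    (hHerm : ∀ n b, (F n b).IsHermitian)
    (htraceless : ∀ n b, (F n b).trace = 0)
    (horth : ∀ n b n' b', ((F n b) * (F n' b')).trace = if n = n' ∧ b = b' then 1 else 0)
    (t : ℝ) :
    ∑ b : Fin (d + 1), ∑ n : Fin d, KGP F t b n * KGP F t b n
      = (((((d:ℝ) + 1) / d - t ^ 2 * (1 + Real.sqrt d) ^ 2)
          + (t ^ 2 * d * (1 + Real.sqrt d) ^ 2) * d : ℝ) : ℂ) • 1 := by
  ext p s
  rw [Matrix.sum_apply]
  rw [Finset.sum_congr rfl fun b _ => Matrix.sum_apply _ _ _ _]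
  rw [Finset.sum_congr rfl fun b _ => Finset.sum_congr rfl fun n _ => Matrix.mul_apply]
  rw [Finset.sum_congr rfl fun b _ => Finset.sum_comm, Finset.sum_comm]
  rw [Finset.sum_congr rfl fun j _ => P4 hd F hHerm htraceless horth t p j j s]
  rw [Finset.sum_add_distrib]
  have h1 : ∑ j : Fin d, ((((d:ℝ) + 1) / d - t ^ 2 * (1 + Real.sqrt d) ^ 2 : ℝ) : ℂ)
      * (if p = j ∧ j = s then 1 else 0)
      = ((((d:ℝ) + 1) / d - t ^ 2 * (1 + Real.sqrt d) ^ 2 : ℝ) : ℂ)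
        * (if p = s then 1 else 0) := by
    rw [← Finset.mul_sum]
    congr 1
    rw [Finset.sum_eq_single p (fun j _ hj => if_neg (fun hh => hj (hh.1.symm)))
      (fun h => absurd (Finset.mem_univ p) h)]
    by_cases h : p = s <;> simp [h]
  have h2 : ∑ j : Fin d, ((t ^ 2 * d * (1 + Real.sqrt d) ^ 2 : ℝ) : ℂ)
      * (if p = s ∧ j = j then 1 else 0)
      = (d : ℂ) * ((t ^ 2 * d * (1 + Real.sqrt d) ^ 2 : ℝ) : ℂ)
        * (if p = s then 1 else 0) := by
    simp only [and_true, Finset.sum_const, Finset.card_univ, Fintype.card_fin, nsmul_eq_mul]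
    ring
  rw [h1, h2, Matrix.smul_apply, Matrix.one_apply, smul_eq_mul]
  by_cases h : p = s <;> simp [h] <;> push_cast <;> ring

theorem localOp_one {M d : ℕ} (i : Fin M) :
    localOp (d := d) i 1 = 1 := by
  ext x y
  unfold localOp
  simp only [Matrix.one_apply]
  by_cases h : x = y
  · subst h
    simp
  · rw [if_neg h]
    by_cases h1 : ∀ j, j ≠ i → x j = y j
    · rw [if_pos h1,
        if_neg (fun he => h (funext fun k => by
          by_cases hk : k = i
          · subst hk; exact he
          · exact h1 k hk))]
    · rw [if_neg h1]

theorem localOp_smul {M d : ℕ} (i : Fin M) (c : ℂ) (A : Matrix (Fin d) (Fin d) ℂ) :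
    localOp i (c • A) = c • localOp i A := by
  ext x y
  simp only [localOp, Matrix.smul_apply, smul_eq_mul, mul_ite, mul_zero]

theorem localOp_sum {M d : ℕ} {ι : Type*} (s : Finset ι) (i : Fin M)
    (f : ι → Matrix (Fin d) (Fin d) ℂ) :
    localOp i (∑ k ∈ s, f k) = ∑ k ∈ s, localOp i (f k) := by
  ext x y
  simp only [localOp, Matrix.sum_apply]
  by_cases h : ∀ j, j ≠ i → x j = y j
  · simp only [if_pos h]
  · simp only [if_neg h, Finset.sum_const_zero]

theorem localOp_mul_same {M d : ℕ} (i : Fin M) (A B : Matrix (Fin d) (Fin d) ℂ) :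
    localOp i A * localOp i B = localOp i (A * B) := by
  classical
  ext x y
  rw [Matrix.mul_apply]
  have hinj : Function.Injective (Function.update x i) := fun v v' h => by
    have := congrFun h i
    simpa using this
  rw [← Finset.sum_subset (Finset.subset_univ (Finset.image (Function.update x i) Finset.univ))
    (fun z _ hz => by
      have hzz : z ≠ Function.update x i (z i) := fun hc => hz (Finset.mem_image.mpr
        ⟨z i, Finset.mem_univ _, hc.symm⟩)
      obtain ⟨k, hk⟩ : ∃ k, z k ≠ Function.update x i (z i) k := by
        by_contra hc
        push_neg at hc
        exact hzz (funext hc)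
      have hki : k ≠ i := fun hc => by subst hc; simp at hk
      rw [Function.update_of_ne hki] at hk
      unfold localOp
      rw [if_neg (fun hc => hk ((hc k hki).symm)), zero_mul])]
  rw [Finset.sum_image (fun v _ v' _ h => hinj h)]
  have hv : ∀ v, localOp i A x (Function.update x i v) * localOp i B (Function.update x i v) y
      = if (∀ j, j ≠ i → x j = y j) then A (x i) v * B v (y i) else 0 := by
    intro v
    unfold localOp
    rw [if_pos (fun j hj => by rw [Function.update_of_ne hj])]
    simp only [Function.update_self]
    by_cases h : ∀ j, j ≠ i → x j = y j
    · rw [if_pos (fun j hj => by rw [Function.update_of_ne hj]; exact h j hj), if_pos h]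
    · rw [if_neg (fun hc => h (fun j hj => by
        rw [← hc j hj, Function.update_of_ne hj])), if_neg h, mul_zero]
  rw [Finset.sum_congr rfl fun v _ => hv v]
  unfold localOp
  by_cases h : ∀ j, j ≠ i → x j = y j
  · rw [if_pos h, Matrix.mul_apply, Finset.sum_congr rfl fun v _ => if_pos h]
  · rw [if_neg h, Finset.sum_congr rfl fun v _ => if_neg h, Finset.sum_const_zero]

theorem localOp_mul_ne {M d : ℕ} {i j : Fin M} (hij : i ≠ j)
    (A B : Matrix (Fin d) (Fin d) ℂ) (x y : Fin M → Fin d) :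
    (localOp i A * localOp j B) x y
      = if (∀ k, k ≠ i → k ≠ j → x k = y k) then A (x i) (y i) * B (x j) (y j) else 0 := by
  classical
  rw [Matrix.mul_apply]
  rw [Finset.sum_eq_single (Function.update x i (y i))
    (fun z _ hz => by
      by_cases c1 : ∀ k, k ≠ i → x k = z k
      · by_cases c2 : ∀ k, k ≠ j → z k = y k
        · exfalso
          apply hz
          funext k
          by_cases hk : k = i
          · subst hk
            rw [Function.update_self]
            exact c2 k hij
          · rw [Function.update_of_ne hk]
            exact (c1 k hk).symm
        · unfold localOp
          rw [if_neg c2, mul_zero]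
      · unfold localOp
        rw [if_neg c1, zero_mul])
    (fun h => absurd (Finset.mem_univ _) h)]
  unfold localOp
  rw [if_pos (fun k hk => by rw [Function.update_of_ne hk])]
  simp only [Function.update_self]
  by_cases h : ∀ k, k ≠ i → k ≠ j → x k = y k
  · rw [if_pos (fun k hk => by
      by_cases hki : k = i
      · subst hki; rw [Function.update_self]
      · rw [Function.update_of_ne hki]; exact h k hki hk), if_pos h]
    congr 1
    rw [Function.update_of_ne (Ne.symm hij)]
  · rw [if_neg (fun hc => h (fun k hki hkj => by
      rw [← hc k hkj, Function.update_of_ne hki])), if_neg h, mul_zero]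

def swapMat {M d : ℕ} (i j : Fin M) : Matrix (Fin M → Fin d) (Fin M → Fin d) ℂ :=
  fun x y => if (∀ k, k ≠ i → k ≠ j → x k = y k) ∧ x i = y j ∧ x j = y i then 1 else 0

theorem swapMat_eq {M d : ℕ} (i j : Fin M) (x y : Fin M → Fin d) :
    swapMat i j x y = if x = y ∘ (Equiv.swap i j) then 1 else 0 := by
  unfold swapMat
  congr 1
  simp only [eq_iff_iff]
  constructor
  · rintro ⟨h1, h2, h3⟩
    funext k
    simp only [Function.comp_apply]
    by_cases hki : k = i
    · subst hki; rw [Equiv.swap_apply_left]; exact h2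
    · by_cases hkj : k = j
      · subst hkj; rw [Equiv.swap_apply_right]; exact h3
      · rw [Equiv.swap_apply_of_ne_of_ne hki hkj]; exact h1 k hki hkj
  · intro h
    subst h
    refine ⟨fun k hki hkj => by simp [Equiv.swap_apply_of_ne_of_ne hki hkj], ?_, ?_⟩
    · simp
    · simp

theorem swapMat_herm {M d : ℕ} (i j : Fin M) : (swapMat (d := d) i j).IsHermitian := by
  ext x y
  rw [Matrix.conjTranspose_apply, swapMat_eq, swapMat_eq]
  have : (y = x ∘ (Equiv.swap i j)) ↔ (x = y ∘ (Equiv.swap i j)) := by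
    constructor <;> intro h <;> subst h <;> funext k <;> simp
  rw [if_congr this rfl rfl]
  split <;> simp

theorem swapMat_sq {M d : ℕ} (i j : Fin M) :
    swapMat (d := d) i j * swapMat i j = 1 := by
  classical
  ext x y
  rw [Matrix.mul_apply]
  rw [Finset.sum_congr rfl fun z _ => by rw [swapMat_eq, swapMat_eq]]
  rw [Finset.sum_eq_single (x ∘ (Equiv.swap i j))
    (fun z _ hz => by rw [if_neg (fun hc => hz ?_), zero_mul]
                      funext k
                      have := congrFun hc ((Equiv.swap i j) k)
                      simp only [Function.comp_apply, Equiv.swap_apply_self] at this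
                      exact this.symm)
    (fun h => absurd (Finset.mem_univ _) h)]
  rw [if_pos (by funext k; simp), one_mul, Matrix.one_apply]
  congr 1
  simp only [eq_iff_iff]
  constructor
  · intro h
    funext k
    have := congrFun h ((Equiv.swap i j) k)
    simpa using this
  · intro h; subst h; rfl

theorem posSemidef_add {n : Type*} [Fintype n] {A B : Matrix n n ℂ}
    (hA : A.PosSemidef) (hB : B.PosSemidef) : (A + B).PosSemidef := by
  exact hA.add hB

theorem posSemidef_sum {n ι : Type*} [Fintype n] [DecidableEq n] (s : Finset ι)
    (f : ι → Matrix n n ℂ) (h : ∀ i ∈ s, (f i).PosSemidef) : (∑ i ∈ s, f i).PosSemidef := by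
  classical
  induction s using Finset.induction_on with
  | empty => simpa using Matrix.PosSemidef.zero
  | insert _ _ hni ih =>
    rw [Finset.sum_insert hni]
    exact posSemidef_add (h _ (Finset.mem_insert_self _ _))
      (ih fun i hi => h i (Finset.mem_insert_of_mem hi))

theorem psd_key {M d : ℕ} (i j : Fin M) {c : ℝ} (hc : 0 ≤ c) :
    ((c : ℂ) • (1 - swapMat (d := d) i j)).PosSemidef := by
  classical
  set S := swapMat (d := d) i j with hS
  have hherm : (1 - S).IsHermitian := Matrix.isHermitian_one.sub (swapMat_herm i j)
  set r : ℝ := Real.sqrt (c / 2) with hr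
  have hr2 : (r : ℂ) * (r : ℂ) = ((c / 2 : ℝ) : ℂ) := by
    rw [← Complex.ofReal_mul, Real.mul_self_sqrt (by positivity)]
  have key : (c : ℂ) • (1 - S) = ((r : ℂ) • (1 - S))ᴴ * ((r : ℂ) • (1 - S)) := by
    rw [Matrix.conjTranspose_smul, hherm.eq, Complex.star_def, Complex.conj_ofReal,
      Matrix.smul_mul,
      Matrix.mul_smul, smul_smul, hr2]
    have hmul : (1 - S) * (1 - S) = (2 : ℂ) • (1 - S) := by
      rw [Matrix.sub_mul, Matrix.mul_sub, Matrix.mul_sub, Matrix.one_mul, Matrix.one_mul,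
        Matrix.mul_one, hS, swapMat_sq]
      ext x y
      simp only [Matrix.sub_apply, Matrix.smul_apply, Matrix.one_apply, smul_eq_mul]
      ring
    rw [hmul, smul_smul]
    congr 1
    push_cast
    ring
  rw [key]
  exact Matrix.posSemidef_conjTranspose_mul_self _

theorem pairSum {M d : ℕ} (hd : 2 ≤ d) (F : Fin (d - 1) → Fin (d + 1) → Matrix (Fin d) (Fin d) ℂ)
    (hHerm : ∀ n b, (F n b).IsHermitian)
    (htraceless : ∀ n b, (F n b).trace = 0)
    (horth : ∀ n b n' b', ((F n b) * (F n' b')).trace = if n = n' ∧ b = b' then 1 else 0)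
    (t : ℝ) {i j : Fin M} (hij : i ≠ j) :
    ∑ b : Fin (d + 1), ∑ n : Fin d, localOp i (KGP F t b n) * localOp j (KGP F t b n)
      = ((((d:ℝ) + 1) / d - t ^ 2 * (1 + Real.sqrt d) ^ 2 : ℝ) : ℂ) • 1
        + ((t ^ 2 * d * (1 + Real.sqrt d) ^ 2 : ℝ) : ℂ) • swapMat i j := by
  ext x y
  rw [Matrix.add_apply, Matrix.smul_apply, Matrix.smul_apply, Matrix.sum_apply]
  rw [Finset.sum_congr rfl fun b _ => Matrix.sum_apply _ _ _ _]
  rw [Finset.sum_congr rfl fun b _ => Finset.sum_congr rfl fun n _ =>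
    localOp_mul_ne hij (KGP F t b n) (KGP F t b n) x y]
  rw [Matrix.one_apply]
  unfold swapMat
  by_cases h : ∀ k, k ≠ i → k ≠ j → x k = y k
  · rw [Finset.sum_congr rfl fun b _ => Finset.sum_congr rfl fun n _ => if_pos h]
    rw [P4 hd F hHerm htraceless horth t (x i) (y i) (x j) (y j)]
    have e1 : (x = y) ↔ (x i = y i ∧ x j = y j) := by
      constructor
      · intro hxy; subst hxy; exact ⟨rfl, rfl⟩
      · rintro ⟨h1, h2⟩
        funext k
        by_cases hki : k = i
        · subst hki; exact h1
        · by_cases hkj : k = j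
          · subst hkj; exact h2
          · exact h k hki hkj
    have e2 : ((∀ k, k ≠ i → k ≠ j → x k = y k) ∧ x i = y j ∧ x j = y i)
        ↔ (x i = y j ∧ x j = y i) := by
      constructor
      · exact fun hh => hh.2
      · exact fun hh => ⟨h, hh⟩
    rw [if_congr e1 rfl rfl, if_congr e2 rfl rfl]
    simp only [smul_eq_mul]
  · rw [Finset.sum_congr rfl fun b _ => Finset.sum_congr rfl fun n _ => if_neg h]
    simp only [Finset.sum_const_zero]
    rw [if_neg (fun hc : x = y => h (fun k _ _ => by rw [hc])), if_neg (fun hc => h hc.1)]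
    simp

/-- Proposition 3.1 / multi-site bound: for 𝐏_n^{(b)} = Σ_i 𝕀⊗…⊗P_n^{(b)}⊗…⊗𝕀
built from a complete Kalev–Gour set of MUMs with parameter κ,
Σ_{b,n} (𝐏_n^{(b)})² ≤ [M²(1+κ) + M(dκ−1)] 𝕀^{⊗M}. -/
theorem stmt_15 {M d : ℕ} (hd : 2 ≤ d) (hM : 1 ≤ M)
    (F : Fin (d - 1) → Fin (d + 1) → Matrix (Fin d) (Fin d) ℂ)
    (hHerm : ∀ n b, (F n b).IsHermitian)
    (htraceless : ∀ n b, (F n b).trace = 0)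
    (horth : ∀ n b n' b', ((F n b) * (F n' b')).trace = if n = n' ∧ b = b' then 1 else 0)
    (t κ : ℝ)
    (hκ : κ = 1 / d + t ^ 2 * (1 + Real.sqrt d) ^ 2 * (d - 1))
    (hpsd : ∀ b n, (KGP F t b n).PosSemidef) :
    ((((M : ℝ) ^ 2 * (1 + κ) + M * (d * κ - 1) : ℝ) : ℂ)
        • (1 : Matrix (Fin M → Fin d) (Fin M → Fin d) ℂ)
      - ∑ b : Fin (d + 1), ∑ n : Fin d,
          (∑ i : Fin M, localOp i (KGP F t b n)) * (∑ i : Fin M, localOp i (KGP F t b n))).PosSemidef := by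
  classical
  have hd0 : (0:ℝ) < d := by positivity
  set A : ℝ := ((d:ℝ) + 1) / d - t ^ 2 * (1 + Real.sqrt d) ^ 2 with hA
  set B : ℝ := t ^ 2 * d * (1 + Real.sqrt d) ^ 2 with hB
  set K : ℝ := A + B * d with hK
  set g : Fin M → Fin M → Matrix (Fin M → Fin d) (Fin M → Fin d) ℂ :=
    fun i j => ∑ b : Fin (d + 1), ∑ n : Fin d,
      localOp i (KGP F t b n) * localOp j (KGP F t b n) with hg
  have hsum : ∑ b : Fin (d + 1), ∑ n : Fin d,
      (∑ i : Fin M, localOp i (KGP F t b n)) * (∑ i : Fin M, localOp i (KGP F t b n))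
      = ∑ i : Fin M, ∑ j : Fin M, g i j := by
    rw [Finset.sum_congr rfl fun b _ => Finset.sum_congr rfl fun n _ =>
      Finset.sum_mul_sum Finset.univ Finset.univ
        (fun i => localOp i (KGP F t b n)) (fun j => localOp j (KGP F t b n))]
    calc ∑ b : Fin (d+1), ∑ n : Fin d, ∑ i : Fin M, ∑ j : Fin M,
            localOp i (KGP F t b n) * localOp j (KGP F t b n)
        = ∑ b : Fin (d+1), ∑ i : Fin M, ∑ n : Fin d, ∑ j : Fin M,
            localOp i (KGP F t b n) * localOp j (KGP F t b n) :=
          Finset.sum_congr rfl fun b _ => Finset.sum_comm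
      _ = ∑ i : Fin M, ∑ b : Fin (d+1), ∑ n : Fin d, ∑ j : Fin M,
            localOp i (KGP F t b n) * localOp j (KGP F t b n) := Finset.sum_comm
      _ = ∑ i : Fin M, ∑ b : Fin (d+1), ∑ j : Fin M, ∑ n : Fin d,
            localOp i (KGP F t b n) * localOp j (KGP F t b n) :=
          Finset.sum_congr rfl fun i _ => Finset.sum_congr rfl fun b _ => Finset.sum_comm
      _ = ∑ i : Fin M, ∑ j : Fin M, ∑ b : Fin (d+1), ∑ n : Fin d,
            localOp i (KGP F t b n) * localOp j (KGP F t b n) :=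
          Finset.sum_congr rfl fun i _ => Finset.sum_comm
  have hdiag : ∀ i : Fin M, g i i = ((K : ℝ) : ℂ) • 1 := by
    intro i
    simp only [hg]
    rw [Finset.sum_congr rfl fun b _ => Finset.sum_congr rfl fun n _ =>
      localOp_mul_same i (KGP F t b n) (KGP F t b n)]
    rw [Finset.sum_congr rfl fun b _ => (localOp_sum Finset.univ i _).symm,
      ← localOp_sum Finset.univ i _, Psq hd F hHerm htraceless horth t,
      localOp_smul, localOp_one]
  have hoff : ∀ i j : Fin M, i ≠ j → g i j = ((A : ℝ) : ℂ) • 1 + ((B : ℝ) : ℂ) • swapMat i j :=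
    fun i j hij => pairSum hd F hHerm htraceless horth t hij
  have hsplit : ∀ i : Fin M, ∑ j : Fin M, g i j
      = ((K : ℝ) : ℂ) • 1 + ∑ j ∈ Finset.univ.erase i,
          (((A : ℝ) : ℂ) • 1 + ((B : ℝ) : ℂ) • swapMat i j) := by
    intro i
    rw [← Finset.add_sum_erase _ _ (Finset.mem_univ i), hdiag i]
    congr 1
    exact Finset.sum_congr rfl fun j hj => hoff i j (Ne.symm (Finset.ne_of_mem_erase hj))
  have hM1 : ((M - 1 : ℕ) : ℂ) = (M : ℂ) - 1 := by
    push_cast [Nat.cast_sub hM]; ring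
  have target_eq : (((M : ℝ) ^ 2 * (1 + κ) + M * (d * κ - 1) : ℝ) : ℂ)
        • (1 : Matrix (Fin M → Fin d) (Fin M → Fin d) ℂ)
      - ∑ b : Fin (d + 1), ∑ n : Fin d,
          (∑ i : Fin M, localOp i (KGP F t b n)) * (∑ i : Fin M, localOp i (KGP F t b n))
      = ∑ i : Fin M, ∑ j ∈ Finset.univ.erase i, ((B : ℝ) : ℂ) • (1 - swapMat i j) := by
    rw [hsum, Finset.sum_congr rfl fun i _ => hsplit i, Finset.sum_add_distrib,
      Finset.sum_const, Finset.card_univ, Fintype.card_fin]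
    rw [Finset.sum_congr rfl fun i (_ : i ∈ Finset.univ) => Finset.sum_add_distrib,
      Finset.sum_add_distrib]
    rw [Finset.sum_congr rfl fun i (_ : i ∈ Finset.univ) =>
      (by rw [Finset.sum_const, Finset.card_erase_of_mem (Finset.mem_univ i),
            Finset.card_univ, Fintype.card_fin] :
        ∑ _j ∈ Finset.univ.erase i, ((A : ℝ) : ℂ) • (1 : Matrix (Fin M → Fin d) (Fin M → Fin d) ℂ)
          = (M - 1 : ℕ) • (((A : ℝ) : ℂ) • 1))]
    rw [Finset.sum_const, Finset.card_univ, Fintype.card_fin]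
    rw [Finset.sum_congr rfl (fun i (_ : i ∈ Finset.univ) => Finset.sum_congr rfl
      fun j _ => smul_sub ((B : ℝ) : ℂ) (1 : Matrix (Fin M → Fin d) (Fin M → Fin d) ℂ)
        (swapMat i j))]
    rw [Finset.sum_congr rfl fun i (_ : i ∈ Finset.univ) => Finset.sum_sub_distrib _ _,
      Finset.sum_sub_distrib]
    rw [Finset.sum_congr rfl fun i (_ : i ∈ Finset.univ) =>
      (by rw [Finset.sum_const, Finset.card_erase_of_mem (Finset.mem_univ i),
            Finset.card_univ, Fintype.card_fin] :
        ∑ _j ∈ Finset.univ.erase i, ((B : ℝ) : ℂ) • (1 : Matrix (Fin M → Fin d) (Fin M → Fin d) ℂ)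
          = (M - 1 : ℕ) • (((B : ℝ) : ℂ) • 1))]
    rw [Finset.sum_const, Finset.card_univ, Fintype.card_fin]
    rw [← Nat.cast_smul_eq_nsmul ℂ (M - 1), ← Nat.cast_smul_eq_nsmul ℂ (M - 1),
      ← Nat.cast_smul_eq_nsmul ℂ M, ← Nat.cast_smul_eq_nsmul ℂ M, ← Nat.cast_smul_eq_nsmul ℂ M,
      hM1]
    have hC : (((M : ℝ) ^ 2 * (1 + κ) + M * (d * κ - 1) : ℝ) : ℂ)
        = (M : ℂ) * (K : ℝ) + (M : ℂ) * ((M : ℂ) - 1) * (A : ℝ)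
          + (M : ℂ) * ((M : ℂ) - 1) * (B : ℝ) := by
      rw [hK, hA, hB, hκ]
      have hdC : (d : ℂ) ≠ 0 := by exact_mod_cast hd0.ne'
      push_cast
      field_simp
      ring
    rw [hC]
    module
  rw [target_eq]
  exact posSemidef_sum _ _ fun i _ => posSemidef_sum _ _ fun j _ =>
    psd_key i j (by rw [hB]; positivity)
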